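/- If V : [0,∞) → ℝ is nonnegative, differentiable, nonincreasing, and V̇(t) ≤ −(1/2)e(t)ᵀQe(t) with Q positive definite and e uniformly continuous, then e(t) → 0 as t → ∞ (Barbalat-type lemma). -/

import Mathlib

/-!
If `e` does not tend to `0`, then `‖e t‖ ≥ ε` at arbitrarily late times `t`. Uniform continuity
keeps `‖e‖ ≥ ε / 2` on the window `[t, t + δ / 2]`, whose length does not depend on `t`, and
positive definiteness of `Q` turns this into `V̇ ≤ -κ` on the window, so `V` drops by `κ δ / 2`
across it. This contradicts the convergence of the bounded-below antitone function `V`, which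
forces `V (t + δ / 2) - V t → 0`.
-/

open Matrix Filter Set Topology

theorem exists_pos_mul_norm_sq_le_of_sq_homogeneous {E : Type*} [NormedAddCommGroup E]
    [NormedSpace ℝ E] [ProperSpace E] {f : E → ℝ} (hf : Continuous f)
    (hsmul : ∀ (a : ℝ) (x : E), f (a • x) = a ^ 2 * f x) (hpos : ∀ x, x ≠ 0 → 0 < f x) :
    ∃ c > 0, ∀ x, c * ‖x‖ ^ 2 ≤ f x := by
  obtain ⟨c, hc, hcf⟩ := (isCompact_sphere (0 : E) 1).exists_forall_le' hf.continuousOn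
    fun x hx => hpos x (ne_zero_of_mem_unit_sphere ⟨x, hx⟩)
  refine ⟨c, hc, fun x => ?_⟩
  rcases eq_or_ne x 0 with rfl | hx
  · simpa using (hsmul 0 0).ge
  · have hxn : 0 < ‖x‖ := norm_pos_iff.mpr hx
    have hunit : ‖x‖⁻¹ • x ∈ Metric.sphere (0 : E) 1 := by simp [norm_smul, hxn.ne']
    calc c * ‖x‖ ^ 2 ≤ f (‖x‖⁻¹ • x) * ‖x‖ ^ 2 := by gcongr; exact hcf _ hunit
      _ = f x := by rw [hsmul]; field_simp

theorem Matrix.PosDef.exists_pos_mul_norm_sq_le_dotProduct_mulVec {ι : Type*} [Fintype ι]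
    {Q : Matrix ι ι ℝ} (hQ : Q.PosDef) :
    ∃ c > 0, ∀ x : EuclideanSpace ℝ ι, c * ‖x‖ ^ 2 ≤ (x : ι → ℝ) ⬝ᵥ Q *ᵥ x := by
  refine exists_pos_mul_norm_sq_le_of_sq_homogeneous (by fun_prop) (fun a x => ?_) fun x hx => ?_
  · simp only [WithLp.ofLp_smul, mulVec_smul, smul_dotProduct, dotProduct_smul, smul_eq_mul]
    ring
  · simpa using hQ.dotProduct_mulVec_pos (by simpa using hx)

theorem AntitoneOn.tendsto_sub_comp_add_atTop {V : ℝ → ℝ} {a : ℝ} (hV : AntitoneOn V (Ici a))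
    (hbdd : BddBelow (V '' Ici a)) (h : ℝ) :
    Tendsto (fun t => V (t + h) - V t) atTop (𝓝 0) := by
  set g : ℝ → ℝ := fun t => V (max a t)
  have hg : Antitone g := fun s t hst =>
    hV (le_max_left a s) (le_max_left a t) (max_le_max le_rfl hst)
  have hgbdd : BddBelow (range g) :=
    hbdd.mono (by rintro _ ⟨t, rfl⟩; exact ⟨max a t, le_max_left a t, rfl⟩)
  have hgV : g =ᶠ[atTop] V :=
    (eventually_ge_atTop a).mono fun t ht => by simp only [g, max_eq_right ht]
  have hlim : Tendsto V atTop (𝓝 (⨅ t, g t)) := (tendsto_atTop_ciInf hg hgbdd).congr' hgV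
  simpa using (hlim.comp (tendsto_atTop_add_const_right _ h tendsto_id)).sub hlim

theorem tendsto_zero_of_deriv_le_neg_of_uniformContinuousOn {E : Type*}
    [SeminormedAddCommGroup E] {e : ℝ → E} (he : UniformContinuousOn e (Ici 0)) {V : ℝ → ℝ}
    (hVdiff : DifferentiableOn ℝ V (Ici 0)) (hVbdd : BddBelow (V '' Ici 0))
    (hVmono : AntitoneOn V (Ici 0)) {W : E → ℝ}
    (hW : ∀ ε > 0, ∃ κ > 0, ∀ x, ε ≤ ‖x‖ → κ ≤ W x)
    (hV' : ∀ t, 0 ≤ t → deriv V t ≤ -W (e t)) :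
    Tendsto e atTop (𝓝 0) := by
  refine Metric.tendsto_nhds.2 fun ε hε => ?_
  by_contra hfar
  simp only [dist_zero_right, not_eventually, not_lt] at hfar
  obtain ⟨δ, hδ, hδe⟩ := Metric.uniformContinuousOn_iff.1 he (ε / 2) (half_pos hε)
  obtain ⟨κ, hκ, hWκ⟩ := hW (ε / 2) (half_pos hε)
  have hdrop : ∀ t, 0 ≤ t → ε ≤ ‖e t‖ → V (t + δ / 2) - V t ≤ -κ * (t + δ / 2 - t) := by
    intro t ht hte
    have hsub : Icc t (t + δ / 2) ⊆ Ici 0 := fun s hs => ht.trans hs.1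
    refine (convex_Icc _ _).image_sub_le_mul_sub_of_deriv_le (hVdiff.continuousOn.mono hsub)
      (hVdiff.mono (interior_subset.trans hsub)) (fun s hs => ?_) t
      (left_mem_Icc.2 (by linarith)) _ (right_mem_Icc.2 (by linarith)) (by linarith)
    rw [interior_Icc] at hs
    have hs0 : 0 ≤ s := ht.trans hs.1.le
    have hclose : dist (e t) (e s) < ε / 2 :=
      hδe t ht s hs0 (by rw [Real.dist_eq, abs_lt]; constructor <;> linarith [hs.1, hs.2])
    have hes : ε / 2 ≤ ‖e s‖ := by
      linarith [norm_le_norm_add_norm_sub' (e t) (e s), dist_eq_norm (e t) (e s)]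
    linarith [hV' s hs0, hWκ _ hes]
  have hsmall : ∀ᶠ t in atTop, 0 ≤ t ∧ -κ * (δ / 2) < V (t + δ / 2) - V t :=
    (eventually_ge_atTop 0).and <| (hVmono.tendsto_sub_comp_add_atTop hVbdd (δ / 2)).eventually
      (lt_mem_nhds (by nlinarith))
  obtain ⟨t, hte, ht, hlt⟩ := (hfar.and_eventually hsmall).exists
  linarith [hdrop t ht hte]

theorem stmt13_general {n : ℕ}
    (Q : Matrix (Fin n) (Fin n) ℝ) (hQ : Q.PosDef)
    (e : ℝ → EuclideanSpace ℝ (Fin n))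
    (he : UniformContinuousOn e (Set.Ici 0))
    (V : ℝ → ℝ) (hVdiff : Differentiable ℝ V)
    (hVpos : ∀ t, 0 ≤ t → 0 ≤ V t)
    (hVmono : AntitoneOn V (Set.Ici 0))
    (hV' : ∀ t, 0 ≤ t →
      deriv V t ≤ -(1/2) * ((e t : Fin n → ℝ) ⬝ᵥ Q.mulVec (e t))) :
    Tendsto e atTop (nhds 0) := by
  obtain ⟨c, hc, hQc⟩ := hQ.exists_pos_mul_norm_sq_le_dotProduct_mulVec
  refine tendsto_zero_of_deriv_le_neg_of_uniformContinuousOn he hVdiff.differentiableOn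
    ⟨0, forall_mem_image.2 hVpos⟩ hVmono (W := fun x => 1 / 2 * ((x : Fin n → ℝ) ⬝ᵥ Q *ᵥ x))
    (fun ε hε => ⟨1 / 2 * (c * ε ^ 2), by positivity, fun x hx => ?_⟩)
    fun t ht => (hV' t ht).trans_eq (neg_mul _ _)
  have : c * ε ^ 2 ≤ c * ‖x‖ ^ 2 := by gcongr
  linarith [hQc x]

/-- Barbalat-type lemma: if `V` is nonnegative, differentiable, nonincreasing
on `[0,∞)` with `V̇(t) ≤ −(1/2)e(t)ᵀQe(t)` for positive definite `Q` and a
uniformly continuous `e`, then `e(t) → 0` as `t → ∞`. -/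
theorem stmt13 {n : ℕ}
    (Q : Matrix (Fin n) (Fin n) ℝ) (hQs : Q.IsSymm) (hQ : Q.PosDef)
    (e : ℝ → EuclideanSpace ℝ (Fin n))
    (he : UniformContinuousOn e (Set.Ici 0))
    (V : ℝ → ℝ) (hVdiff : Differentiable ℝ V)
    (hVpos : ∀ t, 0 ≤ t → 0 ≤ V t)
    (hVmono : AntitoneOn V (Set.Ici 0))
    (hV' : ∀ t, 0 ≤ t →
      deriv V t ≤ -(1/2) * ((e t : Fin n → ℝ) ⬝ᵥ Q.mulVec (e t))) :
    Tendsto e atTop (nhds 0) :=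
  stmt13_general Q hQ e he V hVdiff hVpos hVmono hV'
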